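/- arXiv:1510.04584 — 2 statements merged into one kernel-verified Lean document; each statement's English description precedes it below -/
import Mathlib

section
/- Let S be an idempotent semifield and V a free S-module with fixed basis e_1,…,e_n. The S-algebra congruence on the symmetric algebra Sym V generated by the relations e_i² ∼ 0 (for i = 1,…,n) is independent of the choice of basis of V. -/
open MvPolynomial

/-- A family `b` is a basis of `S^n` if every vector is uniquely a finite `S`-linear
combination of the `b i`. -/
def IsTropBasis {S : Type*} [Semifield S] {n : ℕ} (b : Fin n → (Fin n → S)) : Prop :=
  ∀ v : Fin n → S, ∃! c : Fin n → S, v = ∑ i, c i • b i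

/-! Idempotent addition makes `S` zero-sum-free, so expanding `e_k = ∑ c_i b_i` coordinatewise
forces some `b_i` to be a nonzero multiple of `e_k`; hence a basis of `S^n` is a permuted, rescaled
standard basis. The square of `u e_k` is `u² X_k²` with `u²` a unit, so each family of generators
lies in the congruence generated by the other. -/

lemma eq_zero_of_add_eq_zero_of_add_self {M : Type*} [AddMonoid M] (hid : ∀ a : M, a + a = a)
    {a b : M} (h : a + b = 0) : a = 0 :=
  calc a = a + (a + b) := by rw [h, add_zero]
    _ = a + b := by rw [← add_assoc, hid]
    _ = 0 := h

lemma Finset.eq_zero_of_sum_eq_zero_of_add_self {ι M : Type*} [AddCommMonoid M]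
    (hid : ∀ a : M, a + a = a) {s : Finset ι} {f : ι → M} (h : ∑ i ∈ s, f i = 0) {i : ι}
    (hi : i ∈ s) : f i = 0 := by
  classical
  exact eq_zero_of_add_eq_zero_of_add_self hid (by rw [Finset.add_sum_erase s f hi, h])

section SpanningFamily

variable {S : Type*} [Semiring S] [NoZeroDivisors S] {ι : Type*} [Fintype ι] [DecidableEq ι]
  {b : ι → ι → S}

lemma exists_eq_single_of_span [Nontrivial S] (hid : ∀ s : S, s + s = s)
    (hspan : ∀ v : ι → S, ∃ c : ι → S, v = ∑ i, c i • b i) (k : ι) :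
    ∃ i, ∃ u ≠ 0, b i = Pi.single (M := fun _ => S) k u := by
  obtain ⟨c, hc⟩ := hspan (Pi.single k 1)
  have hcoord : ∀ j, ∑ i, c i * b i j = Pi.single (M := fun _ => S) k 1 j := fun j => by
    rw [hc]; simp [Finset.sum_apply]
  obtain ⟨i, hi⟩ : ∃ i, c i * b i k ≠ 0 := by
    by_contra! h
    simpa [Finset.sum_eq_zero fun i _ => h i] using hcoord k
  refine ⟨i, b i k, right_ne_zero_of_mul hi, funext fun j => ?_⟩
  rcases eq_or_ne j k with rfl | hj
  · simp
  · have hsum : ∑ i, c i * b i j = 0 := by rw [hcoord, Pi.single_eq_of_ne hj]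
    have := Finset.eq_zero_of_sum_eq_zero_of_add_self hid hsum (Finset.mem_univ i)
    rw [Pi.single_eq_of_ne hj]
    exact (mul_eq_zero.mp this).resolve_left (left_ne_zero_of_mul hi)

lemma exists_equiv_eq_single_of_span [Nontrivial S] (hid : ∀ s : S, s + s = s)
    (hspan : ∀ v : ι → S, ∃ c : ι → S, v = ∑ i, c i • b i) :
    ∃ σ : ι ≃ ι, ∀ k, ∃ u ≠ 0, b (σ k) = Pi.single (M := fun _ => S) k u := by
  choose f u hu hf using exists_eq_single_of_span hid hspan
  have hinj : Function.Injective f := fun k k' hkk' => by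
    by_contra hne
    apply hu k
    rw [← Pi.single_eq_same (M := fun _ => S) k (u k), ← hf, hkk', hf, Pi.single_eq_of_ne hne]
  exact ⟨Equiv.ofBijective f hinj.bijective_of_finite, fun k => ⟨u k, hu k, hf k⟩⟩

end SpanningFamily

lemma MvPolynomial.sum_C_single_mul_X {R σ : Type*} [CommSemiring R] [Fintype σ]
    [DecidableEq σ] (k : σ) (u : R) :
    ∑ j, C (Pi.single (M := fun _ => R) k u j) * X j = (C u * X k : MvPolynomial σ R) := by
  rw [Finset.sum_eq_single k (fun j _ hj => by simp [Pi.single_eq_of_ne hj]) (by simp)]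
  simp

lemma RingCon.rel_zero_mul_iff_of_isUnit {R : Type*} [Semiring R] (c : RingCon R) {a x : R}
    (ha : IsUnit a) : c (a * x) 0 ↔ c x 0 := by
  obtain ⟨a, rfl⟩ := ha
  refine ⟨fun h => ?_, fun h => ?_⟩
  · simpa using c.mul (c.refl ↑a⁻¹) h
  · simpa using c.mul (c.refl ↑a) h

/-- Over an idempotent semifield `S`, the `S`-algebra congruence on
`Sym V = S[x_1,…,x_n]` generated by the squares of the members of a basis of `V = S^n`
is independent of the choice of basis: for any basis `b` it agrees with the congruence
generated by the squares of the standard basis vectors. -/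
theorem wedge_congruence_basis_independent {S : Type*} [Semifield S]
    (hid : ∀ s : S, s + s = s) (n : ℕ)
    (b : Fin n → (Fin n → S)) (hb : IsTropBasis b) :
    ringConGen (fun p q : MvPolynomial (Fin n) S =>
        (∃ i, p = (∑ j, C (b i j) * X j) ^ 2) ∧ q = 0)
      = ringConGen (fun p q : MvPolynomial (Fin n) S =>
        (∃ i, p = (X i) ^ 2) ∧ q = 0) := by
  obtain ⟨σ, hσ⟩ := exists_equiv_eq_single_of_span hid fun v => (hb v).exists
  have hsq : ∀ k, ∃ a : MvPolynomial (Fin n) S, IsUnit a ∧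
      (∑ j, C (b (σ k) j) * X j) ^ 2 = a * X k ^ 2 := fun k => by
    obtain ⟨u, hu, hbk⟩ := hσ k
    refine ⟨C u ^ 2, ((IsUnit.mk0 u hu).map C).pow 2, ?_⟩
    rw [hbk, sum_C_single_mul_X, mul_pow]
  apply le_antisymm <;> rw [RingCon.ringConGen_le] <;> rintro p q ⟨⟨i, rfl⟩, rfl⟩
  · obtain ⟨k, rfl⟩ := σ.surjective i
    obtain ⟨a, ha, hk⟩ := hsq k
    rw [hk, RingCon.rel_zero_mul_iff_of_isUnit _ ha]
    exact RingConGen.Rel.of _ _ ⟨⟨k, rfl⟩, rfl⟩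
  · obtain ⟨a, ha, hi⟩ := hsq i
    rw [← RingCon.rel_zero_mul_iff_of_isUnit _ ha, ← hi]
    exact RingConGen.Rel.of _ _ ⟨⟨σ i, rfl⟩, rfl⟩
end

section
/- Let S be an idempotent semifield and w ∈ ⋀^d V a tropical Plücker vector. If I and I' both lie in supp(w) = {K : w_K ≠ 0}, then in ⋀^d Q_w the relation x_{I'} = (w_{I'}/w_I) x_I holds; i.e., all monomials x_I with I ∈ supp(w) are proportional in ⋀^d Q_w, so ⋀^d Q_w is generated by a single element. -/
open Finset

/-- The tropical Plücker relations for a rank-`d` tensor `w ∈ ⋀^d S^n`. -/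
def TropPluckerRel {S : Type*} [Semifield S] (n d : ℕ) (w : Finset (Fin n) → S) : Prop :=
  ∀ A B : Finset (Fin n), A.card = d + 1 → B.card = d - 1 → ∀ p ∈ A \ B,
    ∑ i ∈ A \ B, w (A.erase i) * w (insert i B)
      = ∑ i ∈ (A \ B).erase p, w (A.erase i) * w (insert i B)

/-- The `S`-module congruence generated by a relation `r`: the smallest equivalence
relation containing `r` and compatible with addition and scalar multiplication. -/
inductive ModCongr (S : Type*) [Semiring S] {M : Type*} [AddCommMonoid M] [Module S M]
    (r : M → M → Prop) : M → M → Prop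
  | of {x y} : r x y → ModCongr S r x y
  | refl (x) : ModCongr S r x x
  | symm {x y} : ModCongr S r x y → ModCongr S r y x
  | trans {x y z} : ModCongr S r x y → ModCongr S r y z → ModCongr S r x z
  | add {x y x' y'} : ModCongr S r x y → ModCongr S r x' y' →
      ModCongr S r (x + x') (y + y')
  | smul (s : S) {x y} : ModCongr S r x y → ModCongr S r (s • x) (s • y)

/-- Index type for the standard basis of `⋀^d S^n`: `d`-element subsets of `[n]`. -/
abbrev WIdx (n d : ℕ) := {I : Finset (Fin n) // I.card = d}

/-- The element `x_B ∧ (∑_{i ∈ T} w_{J−i} x_i)` of `⋀^d (S^n)^∨` in coordinates: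
its `K`-coordinate is `∑_{i ∈ T∖B, K = B+i} w_{J−i}`. -/
def wedgeElt {S : Type*} [Semifield S] {n : ℕ} (d : ℕ) (w : Finset (Fin n) → S)
    (T J B : Finset (Fin n)) : WIdx n d → S :=
  fun K => ∑ i ∈ T \ B, if K.1 = insert i B then w (J.erase i) else 0

/-- The generating relations of the congruence presenting `⋀^d Q_w` as a quotient of
`⋀^d (S^n)^∨`: the bend relations of the circuit forms `α_J = ∑_{i∈J} w_{J−i} x_i`
(`J ∈ C([n],d+1)`), wedged with square-free monomials `x_B` of degree `d−1`. -/
def WedgeBendRel {S : Type*} [Semifield S] (n d : ℕ) (w : Finset (Fin n) → S) :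
    (WIdx n d → S) → (WIdx n d → S) → Prop :=
  fun p q => ∃ J B : Finset (Fin n), ∃ j ∈ J, J.card = d + 1 ∧ B.card = d - 1 ∧
    p = wedgeElt d w J J B ∧ q = wedgeElt d w (J.erase j) J B

/-- The basis vector `x_I` of `⋀^d (S^n)^∨` in coordinates. -/
def deltaVec (S : Type*) [Semifield S] (n d : ℕ) (I : Finset (Fin n)) : WIdx n d → S :=
  fun K => if K.1 = I then 1 else 0

/-!
Two monomials `x_{B+a}`, `x_{B+b}` differing in one index are tied together by the bend relation
of `α_{B+a+b} ∧ x_B`, which has only two terms: `w_{B+a} x_{B+b} = w_{B+b} x_{B+a}`. The tropical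
Plücker relations give basis exchange on `supp w`, so two monomials of the support are joined by a
chain of such swaps with invertible coefficients. A monomial `x_K` with `w_K = 0` vanishes in the
quotient: either a neighbour of `K` lies in the support and the swap kills `x_K`, or the bend
relation of `α_{I+b} ∧ x_{K-b}` (with `b ∈ K \ I`) expresses `w_I x_K` through monomials closer
to `I`, which vanish by induction.
-/

namespace ModCongr

variable {S M : Type*} [AddCommMonoid M] {r : M → M → Prop}

instance [Semiring S] [Module S M] : Trans (ModCongr S r) (ModCongr S r) (ModCongr S r) :=
  ⟨ModCongr.trans⟩

theorem sum [Semiring S] [Module S M] {ι : Type*} (s : Finset ι) {f g : ι → M}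
    (h : ∀ i ∈ s, ModCongr S r (f i) (g i)) :
    ModCongr S r (∑ i ∈ s, f i) (∑ i ∈ s, g i) := by
  classical
  induction s using Finset.induction_on with
  | empty => exact refl 0
  | insert a s ha ih =>
    rw [sum_insert ha, sum_insert ha]
    exact (h a (mem_insert_self a s)).add (ih fun i hi => h i (mem_insert_of_mem hi))

theorem of_smul [DivisionSemiring S] [Module S M] {c : S} (hc : c ≠ 0) {x y : M}
    (h : ModCongr S r (c • x) (c • y)) : ModCongr S r x y := by
  simpa [smul_smul, inv_mul_cancel₀ hc] using h.smul c⁻¹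

theorem congr_zero_of_add [Semiring S] [Module S M] {x e : M}
    (h : ModCongr S r (x + e) e) (he : ModCongr S r e 0) : ModCongr S r x 0 := by
  simpa using ((refl x).add he.symm).trans (h.trans he)

end ModCongr

abbrev WedgeCongr {S : Type*} [Semifield S] {n d : ℕ} (w : Finset (Fin n) → S) :
    (WIdx n d → S) → (WIdx n d → S) → Prop :=
  ModCongr S (WedgeBendRel n d w)

local notation:50 x:51 " ≈[" w "] " y:51 => WedgeCongr w x y

theorem TropPluckerRel.exists_insert_erase_ne_zero {S : Type*} [Semifield S] {n d : ℕ}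
    {w : Finset (Fin n) → S} (hpl : TropPluckerRel n d w) {K K' : Finset (Fin n)}
    (hK : K.card = d) (hK' : K'.card = d) (hwK : w K ≠ 0) (hwK' : w K' ≠ 0) {a : Fin n}
    (ha : a ∈ K \ K') : ∃ b ∈ K' \ K, w (insert b (K.erase a)) ≠ 0 := by
  obtain ⟨haK, haK'⟩ := mem_sdiff.mp ha
  have hA : (insert a K').card = d + 1 := by rw [card_insert_of_notMem haK', hK']
  have hB : (K.erase a).card = d - 1 := by rw [card_erase_of_mem haK, hK]
  have hAB : insert a K' \ K.erase a = insert a (K' \ K) := by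
    rw [sdiff_erase (mem_insert_self a K'), insert_sdiff_of_mem _ haK]
  have hnot : a ∉ K' \ K := fun h => haK' (mem_sdiff.mp h).1
  have hrel := hpl _ _ hA hB a (by simp)
  rw [hAB, sum_insert hnot, erase_insert hnot, erase_insert haK', insert_erase haK] at hrel
  by_contra! hzero
  rw [sum_eq_zero fun i hi => by rw [hzero i hi, mul_zero], add_zero] at hrel
  exact mul_ne_zero hwK' hwK hrel

theorem Finset.card_insert_erase_sdiff_lt {α : Type*} [DecidableEq α] {K I : Finset α} {a b : α}
    (ha : a ∈ K \ I) (hb : b ∈ I) : (insert b (K.erase a) \ I).card < (K \ I).card := by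
  rw [insert_sdiff_of_mem _ hb, erase_sdiff_comm]
  exact card_erase_lt_of_mem ha

section Wedge

variable {S : Type*} [Semifield S] {n d : ℕ} (w : Finset (Fin n) → S)

theorem wedgeElt_eq_sum (T J B : Finset (Fin n)) :
    wedgeElt d w T J B = ∑ i ∈ T \ B, w (J.erase i) • deltaVec S n d (insert i B) := by
  funext K
  simp [wedgeElt, deltaVec, Finset.sum_apply, mul_ite]

theorem circuit_sum_congr_erase {J B : Finset (Fin n)} (hJ : J.card = d + 1)
    (hB : B.card = d - 1) {j : Fin n} (hj : j ∈ J) :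
    ∑ i ∈ J \ B, w (J.erase i) • deltaVec S n d (insert i B) ≈[w]
      ∑ i ∈ (J \ B).erase j, w (J.erase i) • deltaVec S n d (insert i B) := by
  rw [← erase_sdiff_comm, ← wedgeElt_eq_sum, ← wedgeElt_eq_sum]
  exact .of ⟨J, B, j, hj, hJ, hB, rfl, rfl⟩

theorem smul_deltaVec_insert_congr {B : Finset (Fin n)} (hB : B.card + 1 = d) {a b : Fin n}
    (ha : a ∉ B) (hb : b ∉ B) (hab : a ≠ b) :
    w (insert a B) • deltaVec S n d (insert b B) ≈[w]
      w (insert b B) • deltaVec S n d (insert a B) := by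
  have haJ : a ∉ insert b B := by simp [hab, ha]
  have hJ : (insert a (insert b B)).card = d + 1 := by
    rw [card_insert_of_notMem haJ, card_insert_of_notMem hb]; omega
  have hJB : insert a (insert b B) \ B = {a, b} := by
    rw [insert_sdiff_of_notMem _ ha, insert_sdiff_of_notMem _ hb, sdiff_self]; rfl
  have hJa : (insert a (insert b B)).erase a = insert b B := erase_insert haJ
  have hJb : (insert a (insert b B)).erase b = insert a B := by
    rw [erase_insert_of_ne hab, erase_insert hb]
  have hB' : B.card = d - 1 := by omega
  have hdel_a := circuit_sum_congr_erase w hJ hB' (mem_insert_self a _)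
  have hdel_b := circuit_sum_congr_erase w hJ hB' (j := b) (by simp)
  have hpair_a : ({a, b} : Finset (Fin n)).erase a = {b} := by
    rw [erase_insert (by simpa using hab)]
  have hpair_b : ({a, b} : Finset (Fin n)).erase b = {a} := by
    rw [pair_comm, erase_insert (by simpa using hab.symm)]
  rw [hJB, sum_pair hab, hpair_a, sum_singleton, hJa, hJb] at hdel_a
  rw [hJB, sum_pair hab, hpair_b, sum_singleton, hJa, hJb] at hdel_b
  exact hdel_a.symm.trans hdel_b

theorem deltaVec_insert_congr_div {B : Finset (Fin n)} (hB : B.card + 1 = d) {a b : Fin n}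
    (ha : a ∉ B) (hb : b ∉ B) (hab : a ≠ b) (hwa : w (insert a B) ≠ 0) :
    deltaVec S n d (insert b B) ≈[w]
      (w (insert b B) / w (insert a B)) • deltaVec S n d (insert a B) :=
  ModCongr.of_smul hwa <| by
    rw [smul_smul, mul_div_cancel₀ _ hwa]
    exact smul_deltaVec_insert_congr w hB ha hb hab

theorem deltaVec_congr_div_of_ne_zero (hpl : TropPluckerRel n d w) {K K' : Finset (Fin n)}
    (hK : K.card = d) (hK' : K'.card = d) (hwK : w K ≠ 0) (hwK' : w K' ≠ 0) :
    deltaVec S n d K' ≈[w] (w K' / w K) • deltaVec S n d K := by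
  induction hN : (K \ K').card using Nat.strong_induction_on generalizing K with
  | _ N ih =>
  obtain hsub | ⟨a, ha⟩ := (K \ K').eq_empty_or_nonempty
  · obtain rfl : K = K' := eq_of_subset_of_card_le (sdiff_eq_empty_iff_subset.mp hsub) (by omega)
    rw [div_self hwK, one_smul]
    exact .refl _
  obtain ⟨b, hb, hwK₁⟩ := hpl.exists_insert_erase_ne_zero hK hK' hwK hwK' ha
  obtain ⟨haK, haK'⟩ := mem_sdiff.mp ha
  obtain ⟨hbK', hbK⟩ := mem_sdiff.mp hb
  have hbB : b ∉ K.erase a := fun h => hbK (mem_of_mem_erase h)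
  have hB : (K.erase a).card + 1 = d := by rw [card_erase_add_one haK, hK]
  have hexch := deltaVec_insert_congr_div w hB (notMem_erase a K) hbB
    (by rintro rfl; exact haK' hbK') (by rwa [insert_erase haK])
  rw [insert_erase haK] at hexch
  set K₁ := insert b (K.erase a)
  have hK₁ : K₁.card = d := by rw [card_insert_of_notMem hbB, hB]
  calc deltaVec S n d K'
      ≈[w] (w K' / w K₁) • deltaVec S n d K₁ :=
        ih _ (hN ▸ card_insert_erase_sdiff_lt ha hbK') hK₁ hwK₁ rfl
    _ ≈[w] (w K' / w K₁) • ((w K₁ / w K) • deltaVec S n d K) := hexch.smul _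
    _ = (w K' / w K) • deltaVec S n d K := by rw [smul_smul, div_mul_div_cancel₀ hwK₁]

theorem deltaVec_congr_zero {I K : Finset (Fin n)} (hI : I.card = d) (hwI : w I ≠ 0)
    (hK : K.card = d) (hwK : w K = 0) : deltaVec S n d K ≈[w] 0 := by
  induction hN : (K \ I).card using Nat.strong_induction_on generalizing K with
  | _ N ih =>
  obtain ⟨b, hb⟩ : (K \ I).Nonempty := by
    rw [sdiff_nonempty]
    intro hKI
    exact hwI (eq_of_subset_of_card_le hKI (by omega) ▸ hwK)
  obtain ⟨hbK, hbI⟩ := mem_sdiff.mp hb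
  have hB : (K.erase b).card + 1 = d := by rw [card_erase_add_one hbK, hK]
  by_cases hnbr : ∃ i ∈ I \ K, w (insert i (K.erase b)) ≠ 0
  · obtain ⟨i, hi, hwi⟩ := hnbr
    have hiK := (mem_sdiff.mp hi).2
    have h := deltaVec_insert_congr_div w hB (fun h => hiK (mem_of_mem_erase h))
      (notMem_erase b K) (by rintro rfl; exact hiK hbK) hwi
    rwa [insert_erase hbK, hwK, zero_div, zero_smul] at h
  push Not at hnbr
  -- the bend relation of `α_{I+b} ∧ x_{K-b}` at `b`, whose other terms vanish by induction
  have hJ : (insert b I).card = d + 1 := by rw [card_insert_of_notMem hbI, hI]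
  have hJB : insert b I \ K.erase b = insert b (I \ K) := by
    rw [sdiff_erase (mem_insert_self b I), insert_sdiff_of_mem _ hbK]
  have hbIK : b ∉ I \ K := fun h => hbI (mem_sdiff.mp h).1
  have hdel := circuit_sum_congr_erase w hJ (B := K.erase b) (by omega) (mem_insert_self b I)
  rw [hJB, sum_insert hbIK, erase_insert hbIK, erase_insert hbI, insert_erase hbK] at hdel
  have hterms : ∀ i ∈ I \ K,
      w ((insert b I).erase i) • deltaVec S n d (insert i (K.erase b)) ≈[w] 0 := by
    intro i hi
    obtain ⟨hiI, hiK⟩ := mem_sdiff.mp hi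
    have hiB : i ∉ K.erase b := fun h => hiK (mem_of_mem_erase h)
    have hcard : (insert i (K.erase b)).card = d := by rw [card_insert_of_notMem hiB, hB]
    have hvanish := ih _ (hN ▸ card_insert_erase_sdiff_lt hb hiI) hcard (hnbr i hi) rfl
    simpa using hvanish.smul (w ((insert b I).erase i))
  refine ModCongr.of_smul hwI ?_
  rw [smul_zero]
  exact ModCongr.congr_zero_of_add hdel (by simpa using ModCongr.sum _ hterms)

theorem deltaVec_congr_div (hpl : TropPluckerRel n d w) {I K : Finset (Fin n)}
    (hI : I.card = d) (hwI : w I ≠ 0) (hK : K.card = d) :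
    deltaVec S n d K ≈[w] (w K / w I) • deltaVec S n d I := by
  by_cases hwK : w K = 0
  · rw [hwK, zero_div, zero_smul]
    exact deltaVec_congr_zero w hI hwI hK hwK
  · exact deltaVec_congr_div_of_ne_zero w hpl hI hK hwI hwK

end Wedge

theorem eq_sum_smul_deltaVec {S : Type*} [Semifield S] {n d : ℕ} (m : WIdx n d → S) :
    m = ∑ K : WIdx n d, m K • deltaVec S n d K := by
  funext L
  simp [Finset.sum_apply, deltaVec, ← Subtype.ext_iff]

theorem supp_monomials_proportional_general {S : Type*} [Semifield S]
    (n d : ℕ) (w : Finset (Fin n) → S)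
    (hpl : TropPluckerRel n d w)
    (I I' : Finset (Fin n)) (hI : I.card = d) (hI' : I'.card = d)
    (hwI : w I ≠ 0) :
    ModCongr S (WedgeBendRel n d w)
        (deltaVec S n d I') ((w I' / w I) • deltaVec S n d I)
    ∧ (∀ m : WIdx n d → S, ∃ s : S,
        ModCongr S (WedgeBendRel n d w) m (s • deltaVec S n d I)) := by
  refine ⟨deltaVec_congr_div w hpl hI hwI hI', fun m => ⟨∑ K, m K * (w K / w I), ?_⟩⟩
  calc m = ∑ K : WIdx n d, m K • deltaVec S n d K := eq_sum_smul_deltaVec m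
    _ ≈[w] ∑ K : WIdx n d, (m K * (w K / w I)) • deltaVec S n d I :=
      ModCongr.sum _ fun K _ => by
        simpa [smul_smul] using (deltaVec_congr_div w hpl hI hwI K.2).smul (m K)
    _ = (∑ K : WIdx n d, m K * (w K / w I)) • deltaVec S n d I := sum_smul.symm

/-- for a tropical Plücker vector `w`, if `I, I' ∈ supp(w)` then in
`⋀^d Q_w` the relation `x_{I'} = (w_{I'}/w_I) · x_I` holds; all monomials `x_I` with
`I ∈ supp(w)` are proportional, so `⋀^d Q_w` is generated by a single element. -/
theorem supp_monomials_proportional {S : Type*} [Semifield S]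
    (hid : ∀ s : S, s + s = s) (n d : ℕ) (w : Finset (Fin n) → S)
    (hpl : TropPluckerRel n d w)
    (I I' : Finset (Fin n)) (hI : I.card = d) (hI' : I'.card = d)
    (hwI : w I ≠ 0) (hwI' : w I' ≠ 0) :
    ModCongr S (WedgeBendRel n d w)
        (deltaVec S n d I') ((w I' / w I) • deltaVec S n d I)
    ∧ (∀ m : WIdx n d → S, ∃ s : S,
        ModCongr S (WedgeBendRel n d w) m (s • deltaVec S n d I)) :=
  supp_monomials_proportional_general n d w hpl I I' hI hI' hwI
end
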